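/- arXiv:2405.04393 — 3 statements merged into one kernel-verified Lean document; each statement's English description precedes it below -/
import Mathlib

section
/- Let (Ω, F, P) be a probability space with a filtration F_0 ⊆ F_1 ⊆ ... ⊆ F_T, and let M_1, ..., M_T be real random variables such that M_t is F_t-measurable, E[M_t | F_{t−1}] = 0 almost surely, |M_t| ≤ 1/c almost surely for a constant c > 0, and E[M_t² | F_{t−1}] ≤ b_t almost surely for constants b_t ≥ 0. Then for every ε > 0, P( |Σ_{t=1}^T M_t| ≥ ε ) ≤ 2·exp( − ε² / ( 2·Σ_{t=1}^T b_t + 2ε/(3c) ) ). -/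
/-!
For `u ≤ a < 3` one has `exp u ≤ 1 + u + 3 u² / (2 (3 - a))`. Applied to `u = l M_t` with
`0 ≤ l < 3c`, and conditioned on `ℱ (t - 1)`, it gives
`E[exp (l M_t) | ℱ (t - 1)] ≤ exp (ψ(l) b_t)` with `ψ(l) = 3 c l² / (2 (3c - l))`, so by the tower
property the moment generating function of `∑ M_t` is at most `exp (ψ(l) V)`, `V = ∑ b_t`.
The Chernoff bound at `l = ε / (V + 2ε/(3c))` gives `exp (-ε² / (2V + 2ε/(3c)))` for the upper
tail, and the same argument for `-M` for the lower one.
-/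

open MeasureTheory Finset Real ProbabilityTheory

lemma le_of_hasDerivAt_monotone_of_eq_zero {f f' : ℝ → ℝ} (hf : ∀ x, HasDerivAt f (f' x) x)
    (hf' : Monotone f') {a : ℝ} (ha : f' a = 0) (x : ℝ) : f a ≤ f x := by
  have hcont : Continuous f := continuous_iff_continuousAt.2 fun x => (hf x).continuousAt
  rcases le_total x a with hxa | hax
  · refine antitoneOn_of_hasDerivWithinAt_nonpos (convex_Iic a) hcont.continuousOn
      (fun y _ => (hf y).hasDerivWithinAt) (fun y hy => ?_) (Set.mem_Iic.2 hxa) Set.self_mem_Iic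
      hxa
    rw [interior_Iic] at hy
    exact ha ▸ hf' (le_of_lt hy)
  · refine monotoneOn_of_hasDerivWithinAt_nonneg (convex_Ici a) hcont.continuousOn
      (fun y _ => (hf y).hasDerivWithinAt) (fun y hy => ?_) Set.self_mem_Ici hax hax
    rw [interior_Ici] at hy
    exact ha ▸ hf' (le_of_lt hy)

lemma one_sub_mul_exp_le_one (u : ℝ) : (1 - u) * exp u ≤ 1 := by
  calc (1 - u) * exp u ≤ exp (-u) * exp u := by
        gcongr; linarith [add_one_le_exp (-u)]
    _ = 1 := by rw [← exp_add, neg_add_cancel, exp_zero]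

lemma three_sub_mul_exp_sub_one_sub_le (u : ℝ) :
    (3 - u) * (exp u - 1 - u) ≤ 3 / 2 * u ^ 2 := by
  have hderiv : ∀ x, HasDerivAt (fun x => 3 / 2 * x ^ 2 - (3 - x) * (exp x - 1 - x))
      ((x - 2) * exp x + x + 2) x := fun x => by
    refine (((hasDerivAt_pow 2 x).const_mul (3 / 2)).sub
      (((hasDerivAt_id x).const_sub 3).mul (((hasDerivAt_exp x).sub_const 1).sub
        (hasDerivAt_id x)))).congr_deriv ?_
    simp only [id, Pi.sub_apply, Nat.cast_ofNat]; ring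
  have hderiv2 : ∀ x, HasDerivAt (fun x => (x - 2) * exp x + x + 2) ((x - 1) * exp x + 1) x :=
    fun x => by
      refine ((((hasDerivAt_id x).sub_const 2).mul (hasDerivAt_exp x)).add
        (hasDerivAt_id x)).add_const 2 |>.congr_deriv ?_
      simp only [id]; ring
  have hmono : Monotone fun x => (x - 2) * exp x + x + 2 :=
    monotone_of_hasDerivAt_nonneg hderiv2 fun x => by
      have := one_sub_mul_exp_le_one x
      simp only [Pi.zero_apply]; linarith
  simpa [sub_nonneg] using le_of_hasDerivAt_monotone_of_eq_zero hderiv hmono (a := 0) (by simp) u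

lemma exp_le_one_add_add_sq_div {u a : ℝ} (hua : u ≤ a) (ha : a < 3) :
    exp u ≤ 1 + u + 3 * u ^ 2 / (2 * (3 - a)) := by
  have h3a : 0 < 3 - a := by linarith
  have hkey : (3 - a) * (exp u - 1 - u) ≤ 3 / 2 * u ^ 2 :=
    le_trans (by gcongr; linarith [add_one_le_exp u]) (three_sub_mul_exp_sub_one_sub_le u)
  rw [add_div' _ _ _ (by positivity), le_div_iff₀ (by positivity)]
  nlinarith

lemma exp_mul_le_of_le_inv {c l x : ℝ} (hl : 0 ≤ l) (hlc : l < 3 * c) (hx : x ≤ 1 / c) :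
    exp (l * x) ≤ 1 + l * x + 3 * c * l ^ 2 / (2 * (3 * c - l)) * x ^ 2 := by
  have hc : 0 < c := by linarith
  have h := exp_le_one_add_add_sq_div (u := l * x) (a := l / c)
    (by simpa [div_eq_mul_one_div l c] using mul_le_mul_of_nonneg_left hx hl)
    (by rw [div_lt_iff₀ hc]; linarith)
  convert h using 2
  field_simp

section condExp

variable {Ω : Type*} {m m0 : MeasurableSpace Ω} {μ : Measure Ω} [IsFiniteMeasure μ]

lemma condExp_exp_mul_le (hm : m ≤ m0) {X : Ω → ℝ} {b c l : ℝ}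
    (hX : AEStronglyMeasurable X μ) (hXc : ∀ᵐ ω ∂μ, |X ω| ≤ 1 / c)
    (hmean : μ[X|m] =ᵐ[μ] 0) (hvar : ∀ᵐ ω ∂μ, μ[fun ω => X ω ^ 2|m] ω ≤ b)
    (hl : 0 ≤ l) (hlc : l < 3 * c) :
    μ[fun ω => exp (l * X ω)|m] ≤ᵐ[μ] fun _ => exp (3 * c * l ^ 2 / (2 * (3 * c - l)) * b) := by
  set K := 3 * c * l ^ 2 / (2 * (3 * c - l))
  have hK : 0 ≤ K := div_nonneg (by nlinarith) (by linarith)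
  have hXint : Integrable X μ := .of_bound hX (1 / c) (by simpa only [Real.norm_eq_abs] using hXc)
  have hX2int : Integrable (fun ω => X ω ^ 2) μ := by
    refine .of_bound (hX.pow 2) ((1 / c) ^ 2) ?_
    filter_upwards [hXc] with ω hω
    rw [Real.norm_eq_abs, abs_pow]
    exact pow_le_pow_left₀ (abs_nonneg _) hω 2
  have hexpint : Integrable (fun ω => exp (l * X ω)) μ := by
    refine .of_bound (continuous_exp.comp_aestronglyMeasurable (hX.const_mul l))
      (exp (l * (1 / c))) ?_
    filter_upwards [hXc] with ω hω
    rw [Real.norm_eq_abs, abs_exp]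
    exact exp_le_exp.2 (mul_le_mul_of_nonneg_left ((le_abs_self _).trans hω) hl)
  have hquadint : Integrable ((fun _ => (1 : ℝ)) + l • X + K • fun ω => X ω ^ 2) μ :=
    ((integrable_const 1).add (hXint.smul l)).add (hX2int.smul K)
  have hle_quad : μ[fun ω => exp (l * X ω)|m] ≤ᵐ[μ]
      μ[(fun _ => (1 : ℝ)) + l • X + K • fun ω => X ω ^ 2|m] := by
    refine condExp_mono hexpint hquadint ?_
    filter_upwards [hXc] with ω hω
    exact exp_mul_le_of_le_inv hl hlc ((le_abs_self _).trans hω)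
  have hquad : μ[(fun _ => (1 : ℝ)) + l • X + K • fun ω => X ω ^ 2|m] =ᵐ[μ]
      (fun _ => (1 : ℝ)) + l • μ[X|m] + K • μ[fun ω => X ω ^ 2|m] := by
    filter_upwards [condExp_add ((integrable_const 1).add (hXint.smul l)) (hX2int.smul K) m,
      condExp_add (integrable_const 1) (hXint.smul l) m, condExp_smul l X m,
      condExp_smul K (fun ω => X ω ^ 2) m] with ω h1 h2 h3 h4
    simp only [Pi.add_apply] at h1 h2 ⊢
    rw [h1, h2, h3, h4, condExp_const hm]
  filter_upwards [hle_quad, hquad, hmean, hvar] with ω h1 h2 h3 h4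
  rw [h2] at h1
  simp only [Pi.add_apply, Pi.smul_apply, smul_eq_mul, h3, Pi.zero_apply] at h1
  calc μ[fun ω => exp (l * X ω)|m] ω ≤ 1 + K * b := by nlinarith
    _ ≤ exp (K * b) := by linarith [add_one_le_exp (K * b)]

lemma integral_mul_le_of_condExp_le (hm : m ≤ m0) {f g : Ω → ℝ} {C : ℝ}
    (hf : StronglyMeasurable[m] f) (hf0 : 0 ≤ f) (hfint : Integrable f μ)
    (hg : Integrable g μ) (hfg : Integrable (f * g) μ) (hgC : μ[g|m] ≤ᵐ[μ] fun _ => C) :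
    ∫ ω, f ω * g ω ∂μ ≤ C * ∫ ω, f ω ∂μ := by
  have hpull := condExp_mul_of_stronglyMeasurable_left hf hfg hg
  calc ∫ ω, f ω * g ω ∂μ = ∫ ω, μ[f * g|m] ω ∂μ := (integral_condExp hm).symm
    _ = ∫ ω, f ω * μ[g|m] ω ∂μ := integral_congr_ae hpull
    _ ≤ ∫ ω, f ω * C ∂μ := by
        refine integral_mono_ae (integrable_condExp.congr hpull) (hfint.mul_const C) ?_
        filter_upwards [hgC] with ω hω
        exact mul_le_mul_of_nonneg_left hω (hf0 ω)
    _ = C * ∫ ω, f ω ∂μ := by rw [integral_mul_const, mul_comm]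

end condExp

section integrability

variable {Ω ι : Type*} {m0 : MeasurableSpace Ω} {μ : Measure Ω} [IsFiniteMeasure μ]

lemma integrable_exp_of_ae_le {f : Ω → ℝ} {C : ℝ} (hf : AEStronglyMeasurable f μ)
    (hfC : ∀ᵐ ω ∂μ, f ω ≤ C) : Integrable (fun ω => exp (f ω)) μ := by
  refine .of_bound (continuous_exp.comp_aestronglyMeasurable hf) (exp C) ?_
  filter_upwards [hfC] with ω hω
  rwa [Real.norm_eq_abs, abs_exp, exp_le_exp]

lemma integrable_exp_sum {s : Finset ι} {Y : ι → Ω → ℝ} {C : ℝ}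
    (hY : ∀ t ∈ s, AEStronglyMeasurable (Y t) μ) (hYC : ∀ t ∈ s, ∀ᵐ ω ∂μ, Y t ω ≤ C) :
    Integrable (fun ω => exp (∑ t ∈ s, Y t ω)) μ := by
  refine integrable_exp_of_ae_le (Finset.aestronglyMeasurable_fun_sum s hY) (C := #s * C) ?_
  filter_upwards [(Filter.eventually_all_finset s).2 hYC] with ω hω
  simpa using sum_le_sum hω

end integrability

lemma integral_exp_sum_le {Ω : Type*} {m0 : MeasurableSpace Ω} {μ : Measure Ω}
    [IsProbabilityMeasure μ] {ℱ : Filtration ℕ m0} {Y : ℕ → Ω → ℝ} {κ : ℕ → ℝ} {C : ℝ} {n : ℕ}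
    (hY : ∀ t ∈ Icc 1 n, StronglyMeasurable[ℱ t] (Y t))
    (hYC : ∀ t ∈ Icc 1 n, ∀ᵐ ω ∂μ, Y t ω ≤ C)
    (hcond : ∀ t ∈ Icc 1 n, μ[fun ω => exp (Y t ω)|ℱ (t - 1)] ≤ᵐ[μ] fun _ => exp (κ t)) :
    ∫ ω, exp (∑ t ∈ Icc 1 n, Y t ω) ∂μ ≤ exp (∑ t ∈ Icc 1 n, κ t) := by
  induction n with
  | zero => simp
  | succ n ih =>
    have hsub : Icc 1 n ⊆ Icc 1 (n + 1) := Icc_subset_Icc_right n.le_succ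
    have hlast : n + 1 ∈ Icc 1 (n + 1) := by simp
    have hYμ : ∀ t ∈ Icc 1 (n + 1), AEStronglyMeasurable (Y t) μ :=
      fun t ht => ((hY t ht).mono (ℱ.le t)).aestronglyMeasurable
    have hf : StronglyMeasurable[ℱ n] fun ω => exp (∑ t ∈ Icc 1 n, Y t ω) :=
      continuous_exp.comp_stronglyMeasurable <| Finset.stronglyMeasurable_fun_sum _
        fun t ht => (hY t (hsub ht)).mono (ℱ.mono (mem_Icc.1 ht).2)
    have hfg := integrable_exp_sum hYμ hYC
    simp only [sum_Icc_succ_top (Nat.le_add_left 1 n), exp_add] at hfg ⊢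
    calc ∫ ω, exp (∑ t ∈ Icc 1 n, Y t ω) * exp (Y (n + 1) ω) ∂μ
        ≤ exp (κ (n + 1)) * ∫ ω, exp (∑ t ∈ Icc 1 n, Y t ω) ∂μ := by
          refine integral_mul_le_of_condExp_le (ℱ.le n) hf (fun ω => (exp_pos _).le)
            (integrable_exp_sum (fun t ht => hYμ t (hsub ht)) fun t ht => hYC t (hsub ht))
            (integrable_exp_of_ae_le (hYμ _ hlast) (hYC _ hlast)) hfg ?_
          simpa using hcond _ hlast
      _ ≤ exp (κ (n + 1)) * exp (∑ t ∈ Icc 1 n, κ t) := by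
          gcongr
          exact ih (fun t ht => hY t (hsub ht)) (fun t ht => hYC t (hsub ht))
            fun t ht => hcond t (hsub ht)
      _ = exp (∑ t ∈ Icc 1 n, κ t) * exp (κ (n + 1)) := mul_comm _ _

lemma measureReal_ge_le_of_mgf_le {Ω : Type*} {m0 : MeasurableSpace Ω} {μ : Measure Ω}
    [IsFiniteMeasure μ] {X : Ω → ℝ} {c V ε : ℝ} (hc : 0 < c) (hV : 0 ≤ V) (hε : 0 < ε)
    (hint : ∀ l, 0 ≤ l → l < 3 * c → Integrable (fun ω => exp (l * X ω)) μ)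
    (hmgf : ∀ l, 0 ≤ l → l < 3 * c → mgf X μ l ≤ exp (3 * c * l ^ 2 / (2 * (3 * c - l)) * V)) :
    μ.real {ω | ε ≤ X ω} ≤ exp (-(ε ^ 2 / (2 * V + 2 * ε / (3 * c)))) := by
  have hden : 0 < V + 2 * ε / (3 * c) := by positivity
  -- Not the optimal `l`, but it gives Bernstein's exponent exactly and stays below `3 * c`
  -- even when `V = 0`.
  set l := ε / (V + 2 * ε / (3 * c)) with hl_def
  have hl : 0 ≤ l := by positivity
  have h3cl : 3 * c - l = 3 * c * (V + ε / (3 * c)) / (V + 2 * ε / (3 * c)) := by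
    rw [hl_def]; field_simp; ring
  have hlc : l < 3 * c := by
    have : 0 < 3 * c - l := h3cl ▸ by positivity
    linarith
  calc μ.real {ω | ε ≤ X ω} ≤ exp (-l * ε) * mgf X μ l :=
        measure_ge_le_exp_mul_mgf ε hl (hint l hl hlc)
    _ ≤ exp (-l * ε) * exp (3 * c * l ^ 2 / (2 * (3 * c - l)) * V) := by
        gcongr
        exact hmgf l hl hlc
    _ = exp (-(ε ^ 2 / (2 * V + 2 * ε / (3 * c)))) := by
        rw [← exp_add, h3cl, hl_def]
        congr 1
        field_simp
        ring

theorem measureReal_sum_ge_le_bernstein {Ω : Type*} {m0 : MeasurableSpace Ω} {μ : Measure Ω}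
    [IsProbabilityMeasure μ] {ℱ : Filtration ℕ m0} {T : ℕ} {M : ℕ → Ω → ℝ} {b : ℕ → ℝ}
    {c ε : ℝ} (hc : 0 < c) (hb : ∀ t ∈ Icc 1 T, 0 ≤ b t) (hε : 0 < ε)
    (hmeas : ∀ t ∈ Icc 1 T, Measurable[ℱ t] (M t))
    (hmean : ∀ t ∈ Icc 1 T, μ[M t|ℱ (t - 1)] =ᵐ[μ] 0)
    (hbd : ∀ t ∈ Icc 1 T, ∀ᵐ ω ∂μ, |M t ω| ≤ 1 / c)
    (hvar : ∀ t ∈ Icc 1 T, ∀ᵐ ω ∂μ, μ[fun ω => M t ω ^ 2|ℱ (t - 1)] ω ≤ b t) :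
    μ.real {ω | ε ≤ ∑ t ∈ Icc 1 T, M t ω}
      ≤ exp (-(ε ^ 2 / (2 * ∑ t ∈ Icc 1 T, b t + 2 * ε / (3 * c)))) := by
  have hM : ∀ t ∈ Icc 1 T, AEStronglyMeasurable (M t) μ :=
    fun t ht => ((hmeas t ht).mono (ℱ.le t) le_rfl).aestronglyMeasurable
  have hlM : ∀ l, 0 ≤ l → ∀ t ∈ Icc 1 T, ∀ᵐ ω ∂μ, l * M t ω ≤ l * (1 / c) := fun l hl t ht => by
    filter_upwards [hbd t ht] with ω hω
    exact mul_le_mul_of_nonneg_left ((le_abs_self _).trans hω) hl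
  refine measureReal_ge_le_of_mgf_le hc (sum_nonneg hb) hε (fun l hl _ => ?_) fun l hl hlc => ?_
  · simp_rw [mul_sum]
    exact integrable_exp_sum (fun t ht => (hM t ht).const_mul l) (hlM l hl)
  · simp_rw [mgf, mul_sum]
    exact integral_exp_sum_le (fun t ht => (hmeas t ht).stronglyMeasurable.const_mul l) (hlM l hl)
      fun t ht => condExp_exp_mul_le (ℱ.le _) (hM t ht) (hbd t ht) (hmean t ht) (hvar t ht) hl hlc

theorem stmt_5_general {Ω : Type*} [m0 : MeasurableSpace Ω] (μ : Measure Ω) [IsProbabilityMeasure μ]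
    (T : ℕ) (ℱ : ℕ → MeasurableSpace Ω)
    (hmono : ∀ s t : ℕ, s ≤ t → ℱ s ≤ ℱ t) (hle : ∀ t, ℱ t ≤ m0)
    (M : ℕ → Ω → ℝ) (c : ℝ) (hc : 0 < c) (b : ℕ → ℝ) (hb : ∀ t, 0 ≤ b t)
    (hmeas : ∀ t ∈ Icc 1 T, Measurable[ℱ t] (M t))
    (hmean : ∀ t ∈ Icc 1 T, μ[M t | ℱ (t - 1)] =ᵐ[μ] 0)
    (hbd : ∀ t ∈ Icc 1 T, ∀ᵐ ω ∂μ, |M t ω| ≤ 1 / c)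
    (hvar : ∀ t ∈ Icc 1 T, ∀ᵐ ω ∂μ, (μ[fun ω' => (M t ω') ^ 2 | ℱ (t - 1)]) ω ≤ b t)
    (ε : ℝ) (hε : 0 < ε) :
    μ {ω | ε ≤ |∑ t ∈ Icc 1 T, M t ω|}
      ≤ ENNReal.ofReal (2 * Real.exp
          (-(ε ^ 2 / (2 * ∑ t ∈ Icc 1 T, b t + 2 * ε / (3 * c))))) := by
  let 𝔽 : Filtration ℕ m0 := ⟨ℱ, fun s t => hmono s t, hle⟩
  have hupper :=
    measureReal_sum_ge_le_bernstein (ℱ := 𝔽) hc (fun t _ => hb t) hε hmeas hmean hbd hvar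
  have hlower := measureReal_sum_ge_le_bernstein (ℱ := 𝔽) (M := fun t ω => -M t ω) hc
    (fun t _ => hb t) hε (fun t ht => (hmeas t ht).neg)
    (fun t ht => (condExp_neg (M t) _).trans (by simpa using (hmean t ht).neg))
    (by simpa only [abs_neg] using hbd) (by simpa only [neg_sq] using hvar)
  rw [ENNReal.le_ofReal_iff_toReal_le (measure_ne_top _ _) (by positivity), ← measureReal_def]
  calc μ.real {ω | ε ≤ |∑ t ∈ Icc 1 T, M t ω|}
      ≤ μ.real ({ω | ε ≤ ∑ t ∈ Icc 1 T, M t ω} ∪ {ω | ε ≤ ∑ t ∈ Icc 1 T, -M t ω}) :=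
        measureReal_mono fun ω hω => by simpa [sum_neg_distrib] using le_abs.1 hω
    _ ≤ _ := measureReal_union_le _ _
    _ ≤ _ := by linarith

/-- Two-sided Freedman/Bernstein-type concentration for a martingale difference
sequence: under the same hypotheses as the Bennett bound,
`P(|∑ M_t| ≥ ε) ≤ 2·exp(−ε²/(2∑b_t + 2ε/(3c)))`. -/
theorem stmt_5 {Ω : Type*} [m0 : MeasurableSpace Ω] (μ : Measure Ω) [IsProbabilityMeasure μ]
    (T : ℕ) (ℱ : ℕ → MeasurableSpace Ω)
    (hmono : ∀ s t : ℕ, s ≤ t → ℱ s ≤ ℱ t) (hle : ∀ t, ℱ t ≤ m0)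
    (M : ℕ → Ω → ℝ) (c : ℝ) (hc : 0 < c) (b : ℕ → ℝ) (hb : ∀ t, 0 ≤ b t)
    (hmeas : ∀ t ∈ Icc 1 T, Measurable[ℱ t] (M t))
    (hint : ∀ t ∈ Icc 1 T, Integrable (M t) μ)
    (hmean : ∀ t ∈ Icc 1 T, μ[M t | ℱ (t - 1)] =ᵐ[μ] 0)
    (hbd : ∀ t ∈ Icc 1 T, ∀ᵐ ω ∂μ, |M t ω| ≤ 1 / c)
    (hvar : ∀ t ∈ Icc 1 T, ∀ᵐ ω ∂μ, (μ[fun ω' => (M t ω') ^ 2 | ℱ (t - 1)]) ω ≤ b t)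
    (ε : ℝ) (hε : 0 < ε) :
    μ {ω | ε ≤ |∑ t ∈ Icc 1 T, M t ω|}
      ≤ ENNReal.ofReal (2 * Real.exp
          (-(ε ^ 2 / (2 * ∑ t ∈ Icc 1 T, b t + 2 * ε / (3 * c))))) :=
  stmt_5_general (m0 := m0) μ T ℱ hmono hle M c hc b hb hmeas hmean hbd hvar ε hε
end

section
/- Let J ≥ 2, let β_2 ≥ β_1 > 0, and let d_1, ..., d_J ≥ 0 be reals such that Σ_{j=1}^J exp(−β_1·d_j) ≥ 1. Then log( Σ_{j=1}^J exp(−β_1·d_j) / Σ_{j=1}^J exp(−β_2·d_j) ) ≤ ((β_2 − β_1)/β_1)·log J. -/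
/-!
With `p = β₂/β₁ ≥ 1` and `a_j = exp(-β₁ d_j)` one has `a_j ^ p = exp(-β₂ d_j)`, so the claim is a
statement about power sums: the power mean inequality `(∑ a)^p ≤ J^(p-1) ∑ a^p` gives
`log (∑ a / ∑ a^p) ≤ (p - 1) log J - (p - 1) log ∑ a`, and the last term is `≤ 0` since `∑ a ≥ 1`.
-/

open Finset Real

theorem Real.log_sum_div_sum_rpow_le {ι : Type*} (s : Finset ι) (a : ι → ℝ)
    (ha : ∀ i ∈ s, 0 ≤ a i) (hsum : 1 ≤ ∑ i ∈ s, a i) {p : ℝ} (hp : 1 ≤ p) :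
    log ((∑ i ∈ s, a i) / ∑ i ∈ s, a i ^ p) ≤ (p - 1) * log #s := by
  set S := ∑ i ∈ s, a i
  set T := ∑ i ∈ s, a i ^ p
  have hS : 0 < S := one_pos.trans_le hsum
  have hs : s.Nonempty := nonempty_of_sum_ne_zero hS.ne'
  have hcard : (0 : ℝ) < #s := by exact_mod_cast hs.card_pos
  have hmean : S ^ p ≤ (#s : ℝ) ^ (p - 1) * T := rpow_sum_le_const_mul_sum_rpow_of_nonneg s hp ha
  have hT : 0 < T := pos_of_mul_pos_right
    ((rpow_pos_of_pos hS p).trans_le hmean) (rpow_nonneg hcard.le _)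
  have hlog : p * log S ≤ (p - 1) * log #s + log T := by
    have := log_le_log (rpow_pos_of_pos hS p) hmean
    rwa [log_rpow hS, log_mul (rpow_pos_of_pos hcard _).ne' hT.ne', log_rpow hcard] at this
  have hlogS : 0 ≤ (p - 1) * log S := mul_nonneg (by linarith) (log_nonneg hsum)
  rw [log_div hS.ne' hT.ne']
  linarith

theorem stmt_16_general (J : ℕ) (β₁ β₂ : ℝ) (hβ₁ : 0 < β₁) (hβ : β₁ ≤ β₂)
    (d : Fin J → ℝ)
    (hsum : 1 ≤ ∑ j, Real.exp (-β₁ * d j)) :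
    Real.log ((∑ j, Real.exp (-β₁ * d j)) / (∑ j, Real.exp (-β₂ * d j)))
      ≤ (β₂ - β₁) / β₁ * Real.log J := by
  have hp : 1 ≤ β₂ / β₁ := (one_le_div hβ₁).mpr hβ
  have hpow : ∀ j, exp (-β₁ * d j) ^ (β₂ / β₁) = exp (-β₂ * d j) := fun j => by
    rw [← exp_mul]
    field_simp
  have hexp : (β₂ - β₁) / β₁ = β₂ / β₁ - 1 := by rw [sub_div, div_self hβ₁.ne']
  simpa only [hpow, hexp, card_univ, Fintype.card_fin] using
    log_sum_div_sum_rpow_le univ (fun j => exp (-β₁ * d j)) (fun j _ => (exp_pos _).le) hsum hp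

/-- Lemma C.2: for `J ≥ 2`, `β₂ ≥ β₁ > 0` and `d_j ≥ 0` with
`∑_j exp(−β₁ d_j) ≥ 1`, one has
`log(∑_j exp(−β₁ d_j) / ∑_j exp(−β₂ d_j)) ≤ ((β₂ − β₁)/β₁)·log J`. -/
theorem stmt_16 (J : ℕ) (hJ : 2 ≤ J) (β₁ β₂ : ℝ) (hβ₁ : 0 < β₁) (hβ : β₁ ≤ β₂)
    (d : Fin J → ℝ) (hd : ∀ j, 0 ≤ d j)
    (hsum : 1 ≤ ∑ j, Real.exp (-β₁ * d j)) :
    Real.log ((∑ j, Real.exp (-β₁ * d j)) / (∑ j, Real.exp (-β₂ * d j)))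
      ≤ (β₂ - β₁) / β₁ * Real.log J :=
  stmt_16_general J β₁ β₂ hβ₁ hβ d hsum
end

section
/- Fix T ≥ 1, J ≥ 2, α ∈ [0, 1], and c ∈ (0, 1]. Let s_1, ..., s_T ∈ ℝ be scores, let Δ_1, ..., Δ_T ∈ [0, 1/c] be weights, and for each expert j ∈ {1, ..., J} let (τ_{j,t})_{t=0}^{T−1} be an arbitrary real sequence of expert quantiles such that 0 ≤ ρ_α(s_t, τ_{j,t−1}) ≤ 1 for all j and all t ∈ {1, ..., T}. Define the expert weights ω_{j,0} = 1 and, for t ≥ 1, ω_{j,t} = exp( −(1/sqrt(t+1))·Σ_{t'=1}^{t} Δ_{t'}·ρ_α(s_{t'}, τ_{j,t'−1}) ), and define the aggregated quantiles τ̄_{t−1} = ( Σ_{j=1}^J ω_{j,t−1}·τ_{j,t−1} ) / ( Σ_{j=1}^J ω_{j,t−1} ) for t = 1, ..., T. Then (1/T)·Σ_{t=1}^T Δ_t·ρ_α(s_t, τ̄_{t−1}) − min_{j ∈ {1,...,J}} (1/T)·Σ_{t=1}^T Δ_t·ρ_α(s_t, τ_{j,t−1}) ≤ 1/(4c²·sqrt(T))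 + 2·(log J)/sqrt(T). -/
/-!
The aggregated quantile is a convex combination of the experts' quantiles, so by convexity of
the pinball loss the learner's loss is at most the weighted average of the experts' losses.
That average is the loss of exponential weights (Hedge) with learning rates `η t = 1/√(t+1)`,
analysed through the potential `softMin η L = -(1/η) log (mean_j exp (-η L_j))`: Hoeffding's
lemma bounds each step's weighted loss by the increment of the potential plus `η B² / 8`,
the potential can only grow as `η` decreases (power-mean inequality), it vanishes at time `0`,
and at time `T` it is at most `min_j L_j + log J / η T`. With `B = 1/c`, `∑ η t ≤ 2√T` and
`1 / η T ≤ 2√T` this gives the bound.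
-/

open Finset

/-- The check (pinball) loss `ρ_α(s, τ) = (s − τ)·(α − 1{s < τ})`. -/
noncomputable def checkLoss (α s τ : ℝ) : ℝ := (s - τ) * (α - if s < τ then 1 else 0)

open Real

theorem checkLoss_eq_max (α s τ : ℝ) :
    checkLoss α s τ = max (α * (s - τ)) ((α - 1) * (s - τ)) := by
  unfold checkLoss
  split_ifs with h
  · rw [max_eq_right (by nlinarith)]; ring
  · rw [max_eq_left (by nlinarith)]; ring

theorem convexOn_checkLoss (α s : ℝ) : ConvexOn ℝ Set.univ (checkLoss α s) := by
  have affine (a : ℝ) : ConvexOn ℝ Set.univ fun τ : ℝ => a * (s - τ) :=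
    ((LinearMap.mulLeft ℝ (-a)).convexOn convex_univ |>.add_const (a * s)).congr
      fun τ _ => by simp; ring
  rw [funext (checkLoss_eq_max α s)]
  exact (affine α).sup (affine (α - 1))

/-- Hoeffding's lemma for the distribution `p` on a finite type. -/
theorem sum_mul_exp_mul_le {ι : Type*} [Fintype ι] {p x : ι → ℝ} (hp : ∀ j, 0 ≤ p j)
    (hp_sum : ∑ j, p j = 1) {a b : ℝ} (hx : ∀ j, x j ∈ Set.Icc a b) (t : ℝ) :
    ∑ j, p j * exp (t * x j) ≤ exp (t * ∑ j, p j * x j + (b - a) ^ 2 * t ^ 2 / 8) := by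
  let _ : MeasurableSpace ι := ⊤
  let P := PMF.ofFintype (fun j => ENNReal.ofReal (p j)) (by
    rw [← ENNReal.ofReal_sum_of_nonneg fun j _ => hp j, hp_sum, ENNReal.ofReal_one])
  have hP (f : ι → ℝ) : ∫ j, f j ∂P.toMeasure = ∑ j, p j * f j := by
    simp [P, PMF.integral_eq_sum, ENNReal.toReal_ofReal (hp _)]
  have hoeffding := (ProbabilityTheory.hasSubgaussianMGF_of_mem_Icc (μ := P.toMeasure) (X := x)
    (measurable_of_countable _).aemeasurable (.of_forall hx)).mgf_le t
  simp only [ProbabilityTheory.mgf, hP, NNReal.coe_pow, NNReal.coe_div, coe_nnnorm, norm_eq_abs,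
    div_pow, sq_abs, NNReal.coe_ofNat] at hoeffding
  set m := ∑ j, p j * x j
  calc ∑ j, p j * exp (t * x j) = exp (t * m) * ∑ j, p j * exp (t * (x j - m)) := by
        rw [mul_sum]; refine sum_congr rfl fun j _ => ?_
        rw [mul_left_comm, ← exp_add]; ring_nf
    _ ≤ exp (t * m) * exp ((b - a) ^ 2 / 2 ^ 2 * t ^ 2 / 2) := by gcongr
    _ = _ := by rw [← exp_add]; ring_nf

section Hedge

variable {ι : Type*} [Fintype ι]

noncomputable def softMin (η : ℝ) (L : ι → ℝ) : ℝ :=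
  -(1 / η) * log ((∑ j, exp (-η * L j)) / Fintype.card ι)

/-- The normalised exponential weights `ω_j / ∑_k ω_k` of the paper, for cumulative losses `L`. -/
noncomputable def gibbs (η : ℝ) (L : ι → ℝ) (j : ι) : ℝ :=
  exp (-η * L j) / ∑ k, exp (-η * L k)

theorem gibbs_nonneg (η : ℝ) (L : ι → ℝ) (j : ι) : 0 ≤ gibbs η L j := by
  unfold gibbs; positivity

variable [Nonempty ι]

theorem sum_exp_neg_mul_pos (η : ℝ) (L : ι → ℝ) : 0 < ∑ j, exp (-η * L j) :=
  sum_pos (fun _ _ => exp_pos _) univ_nonempty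

theorem sum_gibbs (η : ℝ) (L : ι → ℝ) : ∑ j, gibbs η L j = 1 := by
  simp only [gibbs, ← sum_div, div_self (sum_exp_neg_mul_pos η L).ne']

theorem softMin_zero_right (η : ℝ) : softMin η (0 : ι → ℝ) = 0 := by
  simp [softMin]

theorem softMin_le {η : ℝ} (hη : 0 < η) (L : ι → ℝ) (j : ι) :
    softMin η L ≤ L j + log (Fintype.card ι) / η := by
  have hcard : (0 : ℝ) < Fintype.card ι := Nat.cast_pos.mpr Fintype.card_pos
  have hlog : -η * L j ≤ log (∑ k, exp (-η * L k)) := by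
    rw [← log_exp (-η * L j)]
    exact log_le_log (exp_pos _)
      (single_le_sum (f := fun k => exp (-η * L k)) (fun k _ => (exp_pos _).le) (mem_univ j))
  have hdiv : -log (∑ k, exp (-η * L k)) / η ≤ L j := by rw [div_le_iff₀ hη]; linarith
  calc softMin η L = -log (∑ k, exp (-η * L k)) / η + log (Fintype.card ι) / η := by
        rw [softMin, log_div (sum_exp_neg_mul_pos η L).ne' hcard.ne']; ring
    _ ≤ L j + log (Fintype.card ι) / η := by gcongr

theorem softMin_le_softMin {η η' : ℝ} (hη' : 0 < η') (hηη' : η' ≤ η) (L : ι → ℝ) :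
    softMin η L ≤ softMin η' L := by
  have hη : 0 < η := hη'.trans_le hηη'
  have hcard : (0 : ℝ) < Fintype.card ι := Nat.cast_pos.mpr Fintype.card_pos
  have mean (θ : ℝ) : (∑ j, exp (-θ * L j)) / Fintype.card ι
      = ∑ j, (Fintype.card ι : ℝ)⁻¹ * exp (-θ * L j) := by
    rw [sum_div]; exact sum_congr rfl fun j _ => by ring
  have power_mean := rpow_arith_mean_le_arith_mean_rpow univ (fun _ => (Fintype.card ι : ℝ)⁻¹)
    (fun j => exp (-η' * L j)) (fun _ _ => by positivity) (by simp [hcard.ne'])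
    (fun _ _ => (exp_pos _).le) ((one_le_div hη').mpr hηη')
  simp only [← exp_mul] at power_mean
  have hexp (j : ι) : -η' * L j * (η / η') = -η * L j := by field_simp
  simp only [hexp, ← mean] at power_mean
  have hA' : 0 < (∑ j, exp (-η' * L j)) / Fintype.card ι := div_pos (sum_exp_neg_mul_pos η' L) hcard
  have hlog := log_le_log (rpow_pos_of_pos hA' _) power_mean
  rw [log_rpow hA'] at hlog
  calc softMin η L ≤ -(1 / η) * (η / η' * log ((∑ j, exp (-η' * L j)) / Fintype.card ι)) :=
        mul_le_mul_of_nonpos_left hlog (by simp [hη.le])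
    _ = softMin η' L := by rw [softMin]; field_simp

theorem sum_gibbs_mul_le {η : ℝ} (hη : 0 < η) (L x : ι → ℝ) {a b : ℝ}
    (hx : ∀ j, x j ∈ Set.Icc a b) :
    ∑ j, gibbs η L j * x j ≤ softMin η (L + x) - softMin η L + (b - a) ^ 2 / 8 * η := by
  have hcard : (0 : ℝ) < Fintype.card ι := Nat.cast_pos.mpr Fintype.card_pos
  have hratio : ∑ j, gibbs η L j * exp (-η * x j)
      = (∑ j, exp (-η * (L + x) j)) / ∑ j, exp (-η * L j) := by
    rw [sum_div]
    refine sum_congr rfl fun j _ => ?_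
    rw [gibbs, div_mul_eq_mul_div, ← exp_add, Pi.add_apply, mul_add]
  have hoeffding := sum_mul_exp_mul_le (gibbs_nonneg η L) (sum_gibbs η L) hx (-η)
  rw [hratio] at hoeffding
  have hlog := log_le_log (div_pos (sum_exp_neg_mul_pos η _) (sum_exp_neg_mul_pos η L)) hoeffding
  rw [log_exp, log_div (sum_exp_neg_mul_pos η _).ne' (sum_exp_neg_mul_pos η L).ne'] at hlog
  have hdiff : softMin η (L + x) - softMin η L
      = -(log (∑ j, exp (-η * (L + x) j)) - log (∑ j, exp (-η * L j))) / η := by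
    simp only [softMin, log_div (sum_exp_neg_mul_pos η _).ne' hcard.ne']; ring
  rw [hdiff, div_add' _ _ _ hη.ne', le_div_iff₀ hη]
  linarith

theorem sum_range_sum_gibbs_mul_le {η : ℕ → ℝ} (hη_pos : ∀ n, 0 < η n) (hη : Antitone η)
    {ℓ : ι → ℕ → ℝ} {a b : ℝ} {T : ℕ} (hℓ : ∀ j, ∀ i < T, ℓ j i ∈ Set.Icc a b) (j : ι) :
    ∑ i ∈ range T, ∑ k, gibbs (η i) (fun k => ∑ i' ∈ range i, ℓ k i') k * ℓ k i
      ≤ ∑ i ∈ range T, ℓ j i + log (Fintype.card ι) / η T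
        + (b - a) ^ 2 / 8 * ∑ i ∈ range T, η i := by
  set L : ℕ → ι → ℝ := fun n k => ∑ i' ∈ range n, ℓ k i'
  set G : ℕ → ℝ := fun n => softMin (η n) (L n)
  have step : ∀ i ∈ range T, ∑ k, gibbs (η i) (L i) k * ℓ k i
      ≤ G (i + 1) - G i + (b - a) ^ 2 / 8 * η i := fun i hi => by
    have hL : L i + (ℓ · i) = L (i + 1) := funext fun k => (sum_range_succ _ _).symm
    calc ∑ k, gibbs (η i) (L i) k * ℓ k i
        ≤ softMin (η i) (L i + (ℓ · i)) - G i + (b - a) ^ 2 / 8 * η i :=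
          sum_gibbs_mul_le (hη_pos i) _ _ fun k => hℓ k i (mem_range.mp hi)
      _ ≤ G (i + 1) - G i + (b - a) ^ 2 / 8 * η i := by
          rw [hL]; gcongr; exact softMin_le_softMin (hη_pos _) (hη i.le_succ) _
  have hG₀ : G 0 = 0 := softMin_zero_right (η 0)
  calc ∑ i ∈ range T, ∑ k, gibbs (η i) (L i) k * ℓ k i
      ≤ ∑ i ∈ range T, (G (i + 1) - G i + (b - a) ^ 2 / 8 * η i) := sum_le_sum step
    _ = G T + (b - a) ^ 2 / 8 * ∑ i ∈ range T, η i := by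
        rw [sum_add_distrib, sum_range_sub, hG₀, sub_zero, mul_sum]
    _ ≤ _ := by gcongr; exact softMin_le (hη_pos T) (L T) j

theorem sum_range_convexOn_gibbs_le {η : ℕ → ℝ} (hη_pos : ∀ n, 0 < η n) (hη : Antitone η)
    {f : ℕ → ℝ → ℝ} {τ : ι → ℕ → ℝ} {a b : ℝ} {T : ℕ}
    (hf : ∀ i < T, ConvexOn ℝ Set.univ (f i)) (hbd : ∀ j, ∀ i < T, f i (τ j i) ∈ Set.Icc a b)
    (j : ι) :
    ∑ i ∈ range T, f i (∑ k, gibbs (η i) (fun k => ∑ i' ∈ range i, f i' (τ k i')) k * τ k i)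
      ≤ ∑ i ∈ range T, f i (τ j i) + log (Fintype.card ι) / η T
        + (b - a) ^ 2 / 8 * ∑ i ∈ range T, η i := by
  refine le_trans (sum_le_sum fun i hi => ?_) (sum_range_sum_gibbs_mul_le hη_pos hη hbd j)
  simpa only [smul_eq_mul] using (hf i (mem_range.mp hi)).map_sum_le
    (fun k _ => gibbs_nonneg _ _ k) (sum_gibbs _ _) (fun _ _ => Set.mem_univ _)

end Hedge

theorem sum_range_one_div_sqrt_succ_le (T : ℕ) :
    ∑ i ∈ range T, 1 / √((i : ℝ) + 1) ≤ 2 * √T := by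
  have step (n : ℕ) : 1 / √((n : ℝ) + 1) ≤ 2 * √((n : ℝ) + 1) - 2 * √n := by
    have hpos : 0 < √((n : ℝ) + 1) := sqrt_pos.mpr (by positivity)
    have hmono : √(n : ℝ) ≤ √((n : ℝ) + 1) := sqrt_le_sqrt (by linarith)
    have hsq : √(n : ℝ) * √n = n := mul_self_sqrt n.cast_nonneg
    have hsq' : √((n : ℝ) + 1) * √((n : ℝ) + 1) = n + 1 := mul_self_sqrt (by positivity)
    rw [div_le_iff₀ hpos]
    nlinarith [sqrt_nonneg (n : ℝ)]
  calc ∑ i ∈ range T, 1 / √((i : ℝ) + 1)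
      ≤ ∑ i ∈ range T, (2 * √((i + 1 : ℕ) : ℝ) - 2 * √(i : ℝ)) := by
        refine sum_le_sum fun i _ => ?_
        push_cast
        exact step i
    _ = 2 * √T := by rw [sum_range_sub (fun n : ℕ => 2 * √(n : ℝ))]; simp

theorem sqrt_add_one_le_two_mul_sqrt {x : ℝ} (hx : 1 ≤ x) : √(x + 1) ≤ 2 * √x := by
  rw [show 2 * √x = √(2 ^ 2 * x) by rw [sqrt_mul (by norm_num), sqrt_sq (by norm_num)]]
  exact sqrt_le_sqrt (by linarith)

theorem sum_Icc_one_eq_sum_range {M : Type*} [AddCommMonoid M] (g : ℕ → M) (n : ℕ) :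
    ∑ t ∈ Icc 1 n, g t = ∑ i ∈ range n, g (i + 1) := by
  rw [← Ico_add_one_right_eq_Icc, sum_Ico_eq_sum_range]
  simp [add_comm]

theorem average_sum_range_convexOn_gibbs_sub_le {ι : Type*} [Fintype ι] [Nonempty ι]
    {f : ℕ → ℝ → ℝ} {τ : ι → ℕ → ℝ} {B : ℝ} {T : ℕ} (hT : 1 ≤ T)
    (hf : ∀ i < T, ConvexOn ℝ Set.univ (f i)) (hbd : ∀ j, ∀ i < T, f i (τ j i) ∈ Set.Icc 0 B)
    (j : ι) :
    1 / (T : ℝ) * ∑ i ∈ range T, f i (∑ k, gibbs (1 / √((i : ℝ) + 1))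
        (fun k => ∑ i' ∈ range i, f i' (τ k i')) k * τ k i)
      - 1 / (T : ℝ) * ∑ i ∈ range T, f i (τ j i)
      ≤ B ^ 2 / (4 * √T) + 2 * log (Fintype.card ι) / √T := by
  have hη_pos (n : ℕ) : 0 < 1 / √((n : ℝ) + 1) := by positivity
  have hη : Antitone fun n : ℕ => 1 / √((n : ℝ) + 1) := fun m n hmn => by dsimp only; gcongr
  have regret := sum_range_convexOn_gibbs_le hη_pos hη hf hbd j
  rw [div_div_eq_mul_div, div_one, sub_zero] at regret
  have hT' : (1 : ℝ) ≤ T := mod_cast hT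
  have h₁ : log (Fintype.card ι) * √((T : ℝ) + 1) ≤ log (Fintype.card ι) * (2 * √T) := by
    gcongr; exact sqrt_add_one_le_two_mul_sqrt hT'
  have h₂ : B ^ 2 / 8 * ∑ i ∈ range T, 1 / √((i : ℝ) + 1) ≤ B ^ 2 / 8 * (2 * √T) := by
    gcongr; exact sum_range_one_div_sqrt_succ_le T
  have hT_sq : (T : ℝ) = √T * √T := (mul_self_sqrt (by linarith)).symm
  rw [← mul_sub]
  set R := ∑ i ∈ range T, f i (∑ k, gibbs (1 / √((i : ℝ) + 1))
      (fun k => ∑ i' ∈ range i, f i' (τ k i')) k * τ k i) - ∑ i ∈ range T, f i (τ j i)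
  have hR : R ≤ √T * (B ^ 2 / 4 + 2 * log (Fintype.card ι)) := by
    have : B ^ 2 / 8 * (2 * √T) = √T * (B ^ 2 / 4) := by ring
    linarith
  calc 1 / (T : ℝ) * R = R / (√T * √T) := by rw [← hT_sq]; ring
    _ ≤ √T * (B ^ 2 / 4 + 2 * log (Fintype.card ι)) / (√T * √T) := by gcongr
    _ = B ^ 2 / (4 * √T) + 2 * log (Fintype.card ι) / √T := by field_simp

/-- Theorem 3.6 (pathwise regret bound for Bandit Conformal with Experts):
with exponential expert weights `ω_{j,t} = exp(−(1/√(t+1))·∑_{t'≤t} Δ_{t'}·ρ_α(s_{t'}, τ_{j,t'−1}))`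
and aggregated quantiles `τ̄_{t−1} = ∑_j ω_{j,t−1} τ_{j,t−1} / ∑_j ω_{j,t−1}`,
the average aggregated loss exceeds the best expert's average loss by at most
`1/(4c²√T) + 2 ln J/√T`. -/
theorem stmt_17 (T J : ℕ) (hT : 1 ≤ T) (hJ : 2 ≤ J)
    (α c : ℝ) (s : ℕ → ℝ) (Δ : ℕ → ℝ) (hΔ : ∀ t ∈ Icc 1 T, Δ t ∈ Set.Icc (0 : ℝ) (1 / c))
    (τ : Fin J → ℕ → ℝ)
    (hρbd : ∀ j : Fin J, ∀ t ∈ Icc 1 T,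
      checkLoss α (s t) (τ j (t - 1)) ∈ Set.Icc (0 : ℝ) 1)
    (W : Fin J → ℕ → ℝ)
    (hW : ∀ (j : Fin J) (t : ℕ), W j t = Real.exp (-(1 / Real.sqrt ((t : ℝ) + 1)) *
      ∑ t' ∈ Icc 1 t, Δ t' * checkLoss α (s t') (τ j (t' - 1))))
    (τbar : ℕ → ℝ)
    (hτbar : ∀ t ∈ Icc 1 T,
      τbar (t - 1) = (∑ j, W j (t - 1) * τ j (t - 1)) / (∑ j, W j (t - 1))) :
    (1 / (T : ℝ)) * ∑ t ∈ Icc 1 T, Δ t * checkLoss α (s t) (τbar (t - 1))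
      - Finset.univ.inf' ⟨⟨0, by omega⟩, Finset.mem_univ _⟩
          (fun j : Fin J =>
            (1 / (T : ℝ)) * ∑ t ∈ Icc 1 T, Δ t * checkLoss α (s t) (τ j (t - 1)))
      ≤ 1 / (4 * c ^ 2 * Real.sqrt T) + 2 * Real.log J / Real.sqrt T := by
  have : NeZero J := ⟨by omega⟩
  set f : ℕ → ℝ → ℝ := fun i x => Δ (i + 1) * checkLoss α (s (i + 1)) x
  have hmem : ∀ i < T, i + 1 ∈ Icc 1 T := fun i hi => mem_Icc.mpr ⟨by omega, hi⟩
  have hW' (j : Fin J) (n : ℕ) :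
      W j n = exp (-(1 / √((n : ℝ) + 1)) * ∑ i ∈ range n, f i (τ j i)) := by
    rw [hW, sum_Icc_one_eq_sum_range]; simp only [Nat.add_sub_cancel, f]
  have hτbar' : ∀ i < T, τbar i = ∑ k, gibbs (1 / √((i : ℝ) + 1))
      (fun k => ∑ i' ∈ range i, f i' (τ k i')) k * τ k i := fun i hi => by
    have h := hτbar (i + 1) (hmem i hi)
    rw [Nat.add_sub_cancel] at h
    simp only [h, sum_div, gibbs, hW', div_mul_eq_mul_div]
  have hf : ∀ i < T, ConvexOn ℝ Set.univ (f i) := fun i hi =>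
    (convexOn_checkLoss α _).smul (hΔ _ (hmem i hi)).1
  have hbd : ∀ j, ∀ i < T, f i (τ j i) ∈ Set.Icc 0 (1 / c) := fun j i hi => by
    obtain ⟨hΔ₀, hΔ₁⟩ := hΔ _ (hmem i hi)
    obtain ⟨hρ₀, hρ₁⟩ := hρbd j _ (hmem i hi)
    rw [Nat.add_sub_cancel] at hρ₀ hρ₁
    exact ⟨mul_nonneg hΔ₀ hρ₀, (mul_le_of_le_one_right hΔ₀ hρ₁).trans hΔ₁⟩
  obtain ⟨j₀, -, hj₀⟩ := exists_mem_eq_inf' univ_nonempty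
    (fun j : Fin J => (1 / (T : ℝ)) * ∑ t ∈ Icc 1 T, Δ t * checkLoss α (s t) (τ j (t - 1)))
  have regret := average_sum_range_convexOn_gibbs_sub_le hT hf hbd j₀
  rw [← sum_congr rfl fun i hi => congrArg (f i) (hτbar' i (mem_range.mp hi)),
    Fintype.card_fin] at regret
  rw [hj₀, sum_Icc_one_eq_sum_range, sum_Icc_one_eq_sum_range]
  simp only [Nat.add_sub_cancel]
  convert regret using 2
  ring
end
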